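/- Each of the ten Klein fundamental quadrics Q1,…,Q10 is invariant (up to scalar) under the action of the Heisenberg group H_{2,2}. -/
import Mathlib


noncomputable section

open Complex Matrix

def S1 : Matrix (Fin 4) (Fin 4) ℂ := !![0,0,1,0; 0,0,0,1; 1,0,0,0; 0,1,0,0]
def S2 : Matrix (Fin 4) (Fin 4) ℂ := !![0,1,0,0; 1,0,0,0; 0,0,0,1; 0,0,1,0]
def T1 : Matrix (Fin 4) (Fin 4) ℂ := !![1,0,0,0; 0,1,0,0; 0,0,-1,0; 0,0,0,-1]
def T2 : Matrix (Fin 4) (Fin 4) ℂ := !![1,0,0,0; 0,-1,0,0; 0,0,1,0; 0,0,0,-1]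

/-- The Heisenberg group `H_{2,2}`: the subgroup of invertible 4×4 complex matrices
generated by `S1`, `S2`, `T1`, `T2` (all of which have determinant 1). -/
def H22 : Subgroup (Matrix (Fin 4) (Fin 4) ℂ)ˣ :=
  Subgroup.closure {u : (Matrix (Fin 4) (Fin 4) ℂ)ˣ |
    (u : Matrix (Fin 4) (Fin 4) ℂ) = S1 ∨ (u : Matrix (Fin 4) (Fin 4) ℂ) = S2 ∨
    (u : Matrix (Fin 4) (Fin 4) ℂ) = T1 ∨ (u : Matrix (Fin 4) (Fin 4) ℂ) = T2}


abbrev V4 := Fin 4 → ℂ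

/-- The ten Klein fundamental quadrics `Q1, …, Q10` (indexed here by `0, …, 9`),
as quadratic forms on `ℂ⁴` with `x = v 0`, `y = v 1`, `z = v 2`, `w = v 3`. -/
def kleinQuadric : Fin 10 → (V4 → ℂ) :=
  ![fun v => v 0 ^ 2 + v 1 ^ 2 + v 2 ^ 2 + v 3 ^ 2,
    fun v => v 0 * v 3 + v 2 * v 1,
    fun v => v 0 * v 2 + v 1 * v 3,
    fun v => v 0 ^ 2 + v 1 ^ 2 - v 2 ^ 2 - v 3 ^ 2,
    fun v => v 0 ^ 2 - v 1 ^ 2 - v 2 ^ 2 + v 3 ^ 2,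
    fun v => v 0 ^ 2 - v 1 ^ 2 + v 2 ^ 2 - v 3 ^ 2,
    fun v => v 0 * v 3 - v 1 * v 2,
    fun v => v 0 * v 1 + v 2 * v 3,
    fun v => v 0 * v 1 - v 2 * v 3,
    fun v => v 0 * v 2 - v 1 * v 3]


lemma mulVec_S1 (v : V4) : S1.mulVec v = ![v 2, v 3, v 0, v 1] := by
  funext i
  fin_cases i <;> simp [S1, Matrix.mulVec, dotProduct, Fin.sum_univ_four]

lemma mulVec_S2 (v : V4) : S2.mulVec v = ![v 1, v 0, v 3, v 2] := by
  funext i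
  fin_cases i <;> simp [S2, Matrix.mulVec, dotProduct, Fin.sum_univ_four]

lemma mulVec_T1 (v : V4) : T1.mulVec v = ![v 0, v 1, -v 2, -v 3] := by
  funext i
  fin_cases i <;> simp [T1, Matrix.mulVec, dotProduct, Fin.sum_univ_four]

lemma mulVec_T2 (v : V4) : T2.mulVec v = ![v 0, -v 1, v 2, -v 3] := by
  funext i
  fin_cases i <;> simp [T2, Matrix.mulVec, dotProduct, Fin.sum_univ_four]

lemma kq0 (v : V4) : kleinQuadric ⟨0, by norm_num⟩ v = v 0 ^ 2 + v 1 ^ 2 + v 2 ^ 2 + v 3 ^ 2 := rfl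
lemma kq1 (v : V4) : kleinQuadric ⟨1, by norm_num⟩ v = v 0 * v 3 + v 2 * v 1 := rfl
lemma kq2 (v : V4) : kleinQuadric ⟨2, by norm_num⟩ v = v 0 * v 2 + v 1 * v 3 := rfl
lemma kq3 (v : V4) : kleinQuadric ⟨3, by norm_num⟩ v = v 0 ^ 2 + v 1 ^ 2 - v 2 ^ 2 - v 3 ^ 2 := rfl
lemma kq4 (v : V4) : kleinQuadric ⟨4, by norm_num⟩ v = v 0 ^ 2 - v 1 ^ 2 - v 2 ^ 2 + v 3 ^ 2 := rfl
lemma kq5 (v : V4) : kleinQuadric ⟨5, by norm_num⟩ v = v 0 ^ 2 - v 1 ^ 2 + v 2 ^ 2 - v 3 ^ 2 := rfl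
lemma kq6 (v : V4) : kleinQuadric ⟨6, by norm_num⟩ v = v 0 * v 3 - v 1 * v 2 := rfl
lemma kq7 (v : V4) : kleinQuadric ⟨7, by norm_num⟩ v = v 0 * v 1 + v 2 * v 3 := rfl
lemma kq8 (v : V4) : kleinQuadric ⟨8, by norm_num⟩ v = v 0 * v 1 - v 2 * v 3 := rfl
lemma kq9 (v : V4) : kleinQuadric ⟨9, by norm_num⟩ v = v 0 * v 2 - v 1 * v 3 := rfl

lemma gen_invariant (M : Matrix (Fin 4) (Fin 4) ℂ)
    (hM : M = S1 ∨ M = S2 ∨ M = T1 ∨ M = T2) (q : Fin 10) :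
    ∃ c : ℂ, c ≠ 0 ∧ ∀ v : V4, kleinQuadric q (M.mulVec v) = c * kleinQuadric q v := by
  rcases hM with rfl | rfl | rfl | rfl <;> fin_cases q <;>
    first
    | (refine ⟨1, one_ne_zero, fun v => ?_⟩
       simp only [mulVec_S1, mulVec_S2, mulVec_T1, mulVec_T2, kq0, kq1, kq2, kq3, kq4, kq5, kq6, kq7, kq8, kq9,
         Matrix.cons_val_zero, Matrix.cons_val_one, Matrix.cons_val_two,
         Matrix.cons_val_three, Matrix.head_cons, Matrix.tail_cons]
       ring1)
    | (refine ⟨-1, by norm_num, fun v => ?_⟩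
       simp only [mulVec_S1, mulVec_S2, mulVec_T1, mulVec_T2, kq0, kq1, kq2, kq3, kq4, kq5, kq6, kq7, kq8, kq9,
         Matrix.cons_val_zero, Matrix.cons_val_one, Matrix.cons_val_two,
         Matrix.cons_val_three, Matrix.head_cons, Matrix.tail_cons]
       ring1)
/-- Each of the ten Klein fundamental quadrics is invariant, up to a
nonzero scalar, under the linear substitution given by any element of the Heisenberg
group `H_{2,2}`. -/
theorem quadrics_H22_invariant :
    ∀ u ∈ H22, ∀ q : Fin 10, ∃ c : ℂ, c ≠ 0 ∧
      ∀ v : V4, kleinQuadric q ((u : Matrix (Fin 4) (Fin 4) ℂ).mulVec v)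
        = c * kleinQuadric q v := by
  intro u hu q
  induction hu using Subgroup.closure_induction with
  | mem x hx => exact gen_invariant _ hx q
  | one => exact ⟨1, one_ne_zero, fun v => by simp⟩
  | mul x y hx hy ihx ihy =>
      obtain ⟨c, hc, hcv⟩ := ihx
      obtain ⟨d, hd, hdv⟩ := ihy
      refine ⟨c * d, mul_ne_zero hc hd, fun v => ?_⟩
      have : ((x * y : (Matrix (Fin 4) (Fin 4) ℂ)ˣ) : Matrix (Fin 4) (Fin 4) ℂ).mulVec v
          = (x : Matrix (Fin 4) (Fin 4) ℂ).mulVec ((y : Matrix (Fin 4) (Fin 4) ℂ).mulVec v) := by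
        rw [Units.val_mul, ← Matrix.mulVec_mulVec]
      rw [this, hcv, hdv, mul_assoc]
  | inv x hx ih =>
      obtain ⟨c, hc, hcv⟩ := ih
      refine ⟨c⁻¹, inv_ne_zero hc, fun v => ?_⟩
      have h := hcv (((x⁻¹ : (Matrix (Fin 4) (Fin 4) ℂ)ˣ) : Matrix (Fin 4) (Fin 4) ℂ).mulVec v)
      rw [Matrix.mulVec_mulVec] at h
      rw [show ((x : (Matrix (Fin 4) (Fin 4) ℂ)ˣ) : Matrix (Fin 4) (Fin 4) ℂ) *
          ((x⁻¹ : (Matrix (Fin 4) (Fin 4) ℂ)ˣ) : Matrix (Fin 4) (Fin 4) ℂ) = 1 by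
        rw [← Units.val_mul, mul_inv_cancel, Units.val_one], Matrix.one_mulVec] at h
      rw [h, inv_mul_cancel_left₀ hc]
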